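/- arXiv:1706.00626 — 5 statements merged into one kernel-verified Lean document; each statement's English description precedes it below -/
import Mathlib

section
/- Let H be an infinite, finitely generated group. Then there exist a finite symmetric generating set S of H containing 1_H and a map ω : H → S × S, with components written ω(h) = (left(h), right(h)), such that: (a) for every h ∈ H, left(h · right(h)) = right(h)⁻¹ and right(h · left(h)) = left(h)⁻¹ (so that R(h) := h · right(h) and L(h) := h · left(h) are mutually inverse bijections of H); and (b) the induced ℤ-action n ↦ Rⁿ is free: for every h ∈ H and n ∈ ℤ, Rⁿ(h) = h implies n = 0. -/
/-!
If `H` has an element `t` of infinite order, `h ↦ h * t` is the required permutation. Otherwise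
pick `t ≠ 1`, of finite order, and put `K = ⟨t⟩`. Breadth-first search from `K` in the graph on
`H ⧸ K` joining `gK` to `gsK` for generators `s` gives an infinite, locally finite spanning tree,
and identifying `H` with `(H ⧸ K) × K` we walk around it as around a plane tree: along each coset
by right multiplication by `t`, while at two distinguished slots the cycles of the children are
spliced into the cycle of their parent. Each step moves by a bounded amount. On a finite subtree
the walk is a single cycle through all its slots, since attaching a leaf merges two cycles by one
transposition. A finite orbit of the full walk is an orbit of such a finite approximation, so it
would meet every coset, which is impossible as `H ⧸ K` is infinite. For the resulting permutation
`e`, the labels are `right h = h⁻¹ * e h` and `left h = h⁻¹ * e⁻¹ h`, finitely many elements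
that are added to the generating set.
-/

open Equiv Finset

namespace Equiv.Perm

variable {α ι : Type*}

def ofFiberwise (f : α → ι) (τ : ι → Perm α) (hτ : ∀ i x, f (τ i x) = f x) : Perm α where
  toFun x := τ (f x) x
  invFun x := (τ (f x)).symm x
  left_inv x := by simp only [hτ, symm_apply_apply]
  right_inv x := by
    have : f ((τ (f x)).symm x) = f x := by simpa using (hτ (f x) ((τ (f x)).symm x)).symm
    simp only [this, apply_symm_apply]

theorem eq_zero_of_zpow_apply_eq_self {f : Perm α}
    (hf : ∀ x (k : ℕ), 0 < k → (f ^ k) x ≠ x) {x : α} {n : ℤ} (h : (f ^ n) x = x) : n = 0 := by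
  by_contra hn
  refine hf x n.natAbs (Int.natAbs_pos.mpr hn) ?_
  rcases Int.natAbs_eq n with hn' | hn'
  · rwa [hn', zpow_natCast] at h
  · rw [hn', zpow_neg, zpow_natCast, inv_eq_iff_eq] at h
    exact h.symm

variable [DecidableEq α]

theorem IsCycleOn.sameCycle_mul_swap {f : Perm α} {t : Finset α} (ht : f.IsCycleOn t) {a b : α}
    (ha : a ∉ t) (hb : b ∈ t) {x : α} (hx : x ∈ t) : (f * swap a b).SameCycle a x := by
  have hpow : ∀ j < #t, ((f * swap a b) ^ (j + 1)) a = (f ^ (j + 1)) b := by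
    intro j
    induction j with
    | zero => simp
    | succ j ih =>
      intro hj
      have hmem : (f ^ (j + 1)) b ∈ t := by rw [coe_pow]; exact ht.1.mapsTo.iterate _ hb
      have hne : (f ^ (j + 1)) b ≠ b := fun h =>
        absurd (Nat.eq_zero_of_dvd_of_lt ((ht.pow_apply_eq hb).1 h) hj) (by omega)
      rw [pow_succ', mul_apply, ih (by omega), mul_apply,
        swap_apply_of_ne_of_ne (ne_of_mem_of_not_mem hmem ha) hne, ← mul_apply, ← pow_succ']
  obtain ⟨j, hj, rfl⟩ := ht.exists_pow_eq (ht.1.mapsTo hb) hx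
  exact ⟨((j + 1 : ℕ) : ℤ), by rw [zpow_natCast, hpow j hj, pow_succ, mul_apply]⟩

theorem IsCycleOn.mul_swap {f : Perm α} {s t : Finset α} (hs : f.IsCycleOn s)
    (ht : f.IsCycleOn t) (hst : _root_.Disjoint s t) {a b : α} (ha : a ∈ s) (hb : b ∈ t) :
    (f * swap a b).IsCycleOn ↑(s ∪ t) := by
  have hat : a ∉ t := disjoint_left.1 hst ha
  have hbs : b ∉ s := disjoint_right.1 hst hb
  have hsame : ∀ x ∈ s ∪ t, (f * swap a b).SameCycle a x := by
    intro x hx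
    rcases mem_union.1 hx with hx | hx
    · have hab := ht.sameCycle_mul_swap hat hb hb
      rw [swap_comm] at hab ⊢
      exact hab.trans (hs.sameCycle_mul_swap hbs ha hx)
    · exact ht.sameCycle_mul_swap hat hb hx
  have hmaps : Set.MapsTo (f * swap a b) ↑(s ∪ t) ↑(s ∪ t) := by
    intro x hx
    have hx' : swap a b x ∈ s ∪ t := by
      rw [swap_apply_def]
      split_ifs <;> simp_all
    rcases mem_union.1 hx' with h | h
    · exact mem_union_left _ (hs.1.mapsTo h)
    · exact mem_union_right _ (ht.1.mapsTo h)
  refine ⟨((s ∪ t).finite_toSet.injOn_iff_bijOn_of_mapsTo hmaps).1 (Equiv.injective _).injOn,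
    fun x hx y hy => (hsame x hx).symm.trans (hsame y hy)⟩

theorem isCycleOn_singleton_prod {Q Z : Type*} [Fintype Z] {s : Perm Z}
    (hs : s.IsCycleOn _root_.Set.univ) {f : Perm (Q × Z)} {q : Q} (hf : ∀ z, f (q, z) = (q, s z)) :
    f.IsCycleOn ↑({q} ×ˢ (univ : Finset Z)) := by
  have hpow : ∀ (k : ℕ) z, (f ^ k) (q, z) = (q, (s ^ k) z) := by
    intro k
    induction k with
    | zero => simp
    | succ k ih => intro z; rw [pow_succ', mul_apply, ih, hf, pow_succ', mul_apply]
  have hmaps : Set.MapsTo f ↑({q} ×ˢ (univ : Finset Z)) ↑({q} ×ˢ (univ : Finset Z)) := by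
    rintro ⟨q', z⟩ hx
    obtain rfl : q = q' := by simpa using hx
    simp [hf]
  refine ⟨(finite_toSet _).injOn_iff_bijOn_of_mapsTo hmaps |>.1 f.injective.injOn, ?_⟩
  rintro ⟨q₁, z₁⟩ h₁ ⟨q₂, z₂⟩ h₂
  obtain rfl : q = q₁ := by simpa using h₁
  obtain rfl : q = q₂ := by simpa using h₂
  obtain ⟨k, hk⟩ := hs.exists_pow_eq' _root_.Set.finite_univ trivial trivial
  exact ⟨k, by rw [zpow_natCast, hpow, hk]⟩

end Equiv.Perm

theorem List.formPerm_cons_cons_eq_mul_swap {α : Type*} [DecidableEq α] {a b : α} {l : List α}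
    (h : (a :: b :: l).Nodup) : formPerm (a :: b :: l) = formPerm (a :: l) * Equiv.swap a b := by
  have h' : (a :: l).Nodup := h.sublist (by simp)
  rw [← formPerm_rotate _ h 2, ← formPerm_rotate _ h' 1]
  simpa using formPerm_append_pair l a b

structure PlaneForest (Q : Type*) [LinearOrder Q] where
  parent : Q → Q
  children : Q → Finset Q
  parent_eq_of_mem_children {q c : Q} : c ∈ children q → parent c = q
  lt_of_mem_children {q c : Q} : c ∈ children q → q < c

namespace PlaneForest

variable {Q Z : Type*} [LinearOrder Q] (F : PlaneForest Q) {E : Finset Q} {M : Q} {z₀ z₁ : Z}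

def restrict (E : Finset Q) : PlaneForest Q where
  parent := F.parent
  children q := F.children q ∩ E
  parent_eq_of_mem_children h := F.parent_eq_of_mem_children (mem_inter.1 h).1
  lt_of_mem_children h := F.lt_of_mem_children (mem_inter.1 h).1

-- Rotating the corner list of `q` splices the cycles of the children of `q` into that of `q`.
def corners (z₀ z₁ : Z) (q : Q) : List (Q × Z) :=
  (q, z₀) :: ((F.children q).sort (· ≥ ·)).map (·, z₁)

theorem mem_corners {q : Q} {x : Q × Z} :
    x ∈ F.corners z₀ z₁ q ↔ x = (q, z₀) ∨ x.2 = z₁ ∧ x.1 ∈ F.children q := by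
  obtain ⟨c, z⟩ := x
  simp [corners, and_comm, eq_comm]

theorem nodup_corners (hz : z₀ ≠ z₁) (q : Q) : (F.corners z₀ z₁ q).Nodup := by
  refine List.nodup_cons.2 ⟨by simp [hz.symm], (sort_nodup _ _).map fun _ _ h => (Prod.mk.inj h).1⟩

theorem corners_restrict_insert_parent (hM : M ∈ F.children (F.parent M)) (hE : ∀ c ∈ E, c < M) :
    (F.restrict (insert M E)).corners z₀ z₁ (F.parent M) =
      (F.parent M, z₀) :: (M, z₁) :: ((F.restrict E).corners z₀ z₁ (F.parent M)).tail := by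
  have hME : M ∉ F.children (F.parent M) ∩ E := fun h => (hE M (mem_inter.1 h).2).false
  simp only [corners, restrict, inter_insert_of_mem hM,
    sort_insert (· ≥ ·) (fun c hc => (hE c (mem_inter.1 hc).2).le) hME, List.map_cons,
    List.tail_cons]

theorem corners_restrict_insert_of_ne {q : Q} (hq : q ≠ F.parent M) :
    (F.restrict (insert M E)).corners z₀ z₁ q = (F.restrict E).corners z₀ z₁ q := by
  have hM : M ∉ F.children q := fun h => hq (F.parent_eq_of_mem_children h).symm
  simp only [corners, restrict, inter_insert_of_notMem hM]

variable [DecidableEq Z]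

def owner (z₁ : Z) (x : Q × Z) : Q := if x.2 = z₁ then F.parent x.1 else x.1

theorem owner_of_mem_corners (hz : z₀ ≠ z₁) {q : Q} {x : Q × Z} (hx : x ∈ F.corners z₀ z₁ q) :
    F.owner z₁ x = q := by
  rcases F.mem_corners.1 hx with rfl | ⟨h, hc⟩
  · simp [owner, hz]
  · simp [owner, h, F.parent_eq_of_mem_children hc]

def rotation (hz : z₀ ≠ z₁) : Perm (Q × Z) :=
  Perm.ofFiberwise (F.owner z₁) (fun q => (F.corners z₀ z₁ q).formPerm) fun q x => by
    by_cases hx : x ∈ F.corners z₀ z₁ q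
    · rw [F.owner_of_mem_corners hz hx,
        F.owner_of_mem_corners hz (List.formPerm_apply_mem_of_mem hx)]
    · rw [List.formPerm_apply_of_notMem hx]

def tour (s : Perm Z) (hz : z₀ ≠ z₁) : Perm (Q × Z) :=
  Equiv.prodCongrRight (fun _ => s) * F.rotation hz

theorem rotation_apply (hz : z₀ ≠ z₁) (x : Q × Z) :
    F.rotation hz x = (F.corners z₀ z₁ (F.owner z₁ x)).formPerm x := rfl

theorem tour_apply (s : Perm Z) (hz : z₀ ≠ z₁) (x : Q × Z) :
    F.tour s hz x = ((F.rotation hz x).1, s (F.rotation hz x).2) := rfl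

theorem rotation_apply_eq_or_mem (hz : z₀ ≠ z₁) (x : Q × Z) :
    F.rotation hz x = x ∨
      x ∈ F.corners z₀ z₁ (F.owner z₁ x) ∧ F.rotation hz x ∈ F.corners z₀ z₁ (F.owner z₁ x) := by
  by_cases hx : x ∈ F.corners z₀ z₁ (F.owner z₁ x)
  · exact .inr ⟨hx, List.formPerm_apply_mem_of_mem hx⟩
  · exact .inl (List.formPerm_apply_of_notMem hx)

theorem restrict_owner (E : Finset Q) : (F.restrict E).owner z₁ = F.owner z₁ := rfl

theorem rotation_restrict_insert (hz : z₀ ≠ z₁) (hM : M ∈ F.children (F.parent M))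
    (hE : ∀ c ∈ E, c < M) :
    (F.restrict (insert M E)).rotation hz =
      (F.restrict E).rotation hz * swap (F.parent M, z₀) (M, z₁) := by
  have hown : ∀ x, F.owner z₁ (swap (F.parent M, z₀) (M, z₁) x) = F.owner z₁ x := by
    intro x
    rw [swap_apply_def]
    split_ifs <;> simp_all [owner]
  ext1 x
  simp only [Perm.mul_apply, rotation_apply, restrict_owner, hown]
  by_cases hx : F.owner z₁ x = F.parent M
  · rw [hx, F.corners_restrict_insert_parent hM hE, List.formPerm_cons_cons_eq_mul_swap]
    · rfl
    · rw [← F.corners_restrict_insert_parent hM hE]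
      exact nodup_corners _ hz _
  · have hx' : ∀ y, F.owner z₁ y = F.parent M → x ≠ y := fun y hy h => hx (h ▸ hy)
    rw [F.corners_restrict_insert_of_ne hx, swap_apply_of_ne_of_ne (hx' _ (by simp [owner, hz]))
      (hx' _ (by simp [owner]))]

theorem tour_restrict_insert (s : Perm Z) (hz : z₀ ≠ z₁) (hM : M ∈ F.children (F.parent M))
    (hE : ∀ c ∈ E, c < M) :
    (F.restrict (insert M E)).tour s hz =
      (F.restrict E).tour s hz * swap (F.parent M, z₀) (M, z₁) := by
  rw [tour, tour, F.rotation_restrict_insert hz hM hE, mul_assoc]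

theorem tour_restrict_apply_of_lt (s : Perm Z) (hz : z₀ ≠ z₁) (hE : ∀ c ∈ E, c < M) (z : Z) :
    (F.restrict E).tour s hz (M, z) = (M, s z) := by
  suffices (F.restrict E).rotation hz (M, z) = (M, z) by rw [tour_apply, this]
  rw [rotation_apply]
  by_cases hz' : z = z₁
  · subst hz'
    rw [restrict_owner, show F.owner z (M, z) = F.parent M by simp [owner]]
    apply List.formPerm_apply_of_notMem
    intro h
    rcases (F.restrict E).mem_corners.1 h with h | ⟨-, h⟩
    · exact hz (Prod.ext_iff.1 h).2.symm
    · exact (hE M (mem_inter.1 h).2).false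
  · have : (F.restrict E).children M = ∅ := eq_empty_of_forall_notMem fun c hc =>
      ((hE c (mem_inter.1 hc).2).trans (F.lt_of_mem_children (mem_inter.1 hc).1)).false
    simp [owner, hz', corners, this]

theorem tour_restrict_apply (s : Perm Z) (hz : z₀ ≠ z₁) {x : Q × Z}
    (hx : F.children (F.owner z₁ x) ⊆ E) : (F.restrict E).tour s hz x = F.tour s hz x := by
  have : (F.restrict E).corners z₀ z₁ (F.owner z₁ x) = F.corners z₀ z₁ (F.owner z₁ x) := by
    simp only [corners, restrict, inter_eq_left.2 hx]
  simp only [tour_apply, rotation_apply, restrict_owner, this]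

end PlaneForest

structure PlaneTree (Q : Type*) [LinearOrder Q] extends PlaneForest Q where
  root : Q
  mem_children_parent_iff {c : Q} : c ∈ children (parent c) ↔ c ≠ root
  exists_iterate_parent_eq_root (c : Q) : ∃ k, parent^[k] c = root

namespace PlaneTree

variable {Q Z : Type*} [LinearOrder Q] (T : PlaneTree Q)

-- `E` is the set of non-root vertices of a subtree containing the root.
def IsSubtree (E : Finset Q) : Prop := T.root ∉ E ∧ ∀ c ∈ E, T.parent c ∈ insert T.root E

namespace IsSubtree

variable {T} {E : Finset Q}

theorem parent_lt (hE : T.IsSubtree E) {c : Q} (hc : c ∈ E) : T.parent c < c :=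
  T.lt_of_mem_children (T.mem_children_parent_iff.2 fun h => hE.1 (h ▸ hc))

theorem parent_mem_of_le {M c : Q} (hE : T.IsSubtree (insert M E)) (hc : c ∈ insert M E)
    (hcM : c ≤ M) : T.parent c ∈ insert T.root E := by
  have := hE.2 c hc
  simp only [mem_insert] at this ⊢
  exact this.imp_right (Or.resolve_left · ((hE.parent_lt hc).trans_le hcM).ne)

theorem of_insert {M : Q} (hE : T.IsSubtree (insert M E)) (hlt : ∀ c ∈ E, c < M) :
    T.IsSubtree E :=
  ⟨fun h => hE.1 (mem_insert_of_mem h),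
    fun c hc => hE.parent_mem_of_le (mem_insert_of_mem hc) (hlt c hc).le⟩

end IsSubtree

theorem ne_root_of_mem_children {q c : Q} (hc : c ∈ T.children q) : c ≠ T.root :=
  T.mem_children_parent_iff.1 (T.parent_eq_of_mem_children hc ▸ hc)

theorem exists_isSubtree_mem (a : Q) : ∃ E, T.IsSubtree E ∧ a ∈ insert T.root E := by
  obtain ⟨k, hk⟩ := T.exists_iterate_parent_eq_root a
  induction k generalizing a with
  | zero => exact ⟨∅, by simp [IsSubtree], by simp [← hk]⟩
  | succ k ih =>
    obtain ⟨E, ⟨hr, hE⟩, hpa⟩ := ih (T.parent a) hk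
    by_cases ha : a = T.root
    · exact ⟨E, ⟨hr, hE⟩, ha ▸ mem_insert_self _ _⟩
    refine ⟨insert a E, ⟨by simp [hr, Ne.symm ha], ?_⟩, by simp⟩
    intro c hc
    rcases mem_insert.1 hc with rfl | hc
    · exact insert_subset_insert _ (subset_insert _ _) hpa
    · exact insert_subset_insert _ (subset_insert _ _) (hE c hc)

theorem exists_isSubtree_superset (A : Finset Q) : ∃ E, T.IsSubtree E ∧ A ⊆ insert T.root E := by
  induction A using Finset.induction_on with
  | empty => exact ⟨∅, by simp [IsSubtree], by simp⟩
  | insert a A _ ih =>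
    obtain ⟨E₁, ⟨hr₁, hE₁⟩, hA⟩ := ih
    obtain ⟨E₂, ⟨hr₂, hE₂⟩, ha⟩ := T.exists_isSubtree_mem a
    refine ⟨E₁ ∪ E₂, ⟨by simp [hr₁, hr₂], fun c hc => ?_⟩, ?_⟩
    · rcases mem_union.1 hc with hc | hc
      · exact insert_subset_insert _ subset_union_left (hE₁ c hc)
      · exact insert_subset_insert _ subset_union_right (hE₂ c hc)
    · rw [insert_subset_iff]
      exact ⟨insert_subset_insert _ subset_union_right ha,
        hA.trans (insert_subset_insert _ subset_union_left)⟩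

variable [Fintype Z] [DecidableEq Z] {s : Perm Z} {z₀ z₁ : Z}

theorem isCycleOn_tour_restrict (hs : s.IsCycleOn _root_.Set.univ) (hz : z₀ ≠ z₁) {E : Finset Q}
    (hE : T.IsSubtree E) :
    ((T.restrict E).tour s hz).IsCycleOn ↑(insert T.root E ×ˢ (univ : Finset Z)) := by
  induction E using Finset.induction_on_max with
  | empty =>
    simpa using Perm.isCycleOn_singleton_prod hs
      (T.tour_restrict_apply_of_lt s hz (E := ∅) (M := T.root) (by simp))
  | insert M E hlt ih =>
    have hMr : M ≠ T.root := fun h => hE.1 (h ▸ mem_insert_self _ _)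
    have hMr' : M ∉ insert T.root E := by
      simp only [mem_insert, not_or]
      exact ⟨hMr, fun h => (hlt M h).false⟩
    have hpM : T.parent M ∈ insert T.root E := hE.parent_mem_of_le (mem_insert_self _ _) le_rfl
    rw [T.tour_restrict_insert s hz (T.mem_children_parent_iff.2 hMr) hlt]
    convert (ih (hE.of_insert hlt)).mul_swap
      (Perm.isCycleOn_singleton_prod hs (T.tour_restrict_apply_of_lt s hz hlt))
      (disjoint_product.2 (.inl (disjoint_singleton_right.2 hMr')))
      (mk_mem_product hpM (mem_univ z₀)) (mk_mem_product (mem_singleton_self M) (mem_univ z₁))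
      using 2
    ext ⟨q, z⟩
    simp only [mem_product, mem_insert, mem_union, mem_singleton, mem_univ, and_true]
    tauto

theorem tour_pow_apply_ne [Infinite Q] (hs : s.IsCycleOn _root_.Set.univ) (hz : z₀ ≠ z₁)
    (x : Q × Z) {k : ℕ} (hk : 0 < k) : (T.tour s hz ^ k) x ≠ x := by
  intro hx
  set τ := T.tour s hz
  set O := (range k).image fun i => (τ ^ i) x
  have hper : Function.IsPeriodicPt τ k x := by rwa [Perm.coe_pow] at hx
  have horbit : ∀ i, (τ ^ i) x ∈ O := fun i => mem_image.2 ⟨i % k, mem_range.2 (Nat.mod_lt _ hk),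
    by simpa only [Perm.coe_pow] using hper.iterate_mod_apply i⟩
  -- On `O` the tour agrees with the tour of a finite subtree containing the children of all
  -- owners met along `O`; that tour is one cycle through every slot of the subtree.
  suffices hslot : ∀ v, (v, z₀) ∈ O from not_finite_iff_infinite.2 ‹_› <|
    .of_injective (fun v => (⟨(v, z₀), hslot v⟩ : O)) fun v w h => by simpa using h
  intro v
  obtain ⟨E, hE, hA⟩ := T.exists_isSubtree_superset
    (insert v (insert x.1 (O.biUnion fun y => T.children (T.owner z₁ y))))
  have hagree : ∀ y ∈ O, (T.restrict E).tour s hz y = τ y := by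
    refine fun y hy => T.tour_restrict_apply s hz fun c hc => ?_
    have := hA (mem_insert_of_mem (mem_insert_of_mem (mem_biUnion.2 ⟨y, hy, hc⟩)))
    exact (mem_insert.1 this).resolve_left (T.ne_root_of_mem_children hc)
  have hpow : ∀ i, ((T.restrict E).tour s hz ^ i) x = (τ ^ i) x := by
    intro i
    induction i with
    | zero => rfl
    | succ i ih =>
      rw [pow_succ', Perm.mul_apply, ih, hagree _ (horbit i), ← Perm.mul_apply, ← pow_succ']
  obtain ⟨i, -, hi⟩ := (T.isCycleOn_tour_restrict hs hz hE).exists_pow_eq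
    (mk_mem_product (hA (mem_insert_of_mem (mem_insert_self _ _))) (mem_univ x.2))
    (mk_mem_product (hA (mem_insert_self _ _)) (mem_univ z₀))
  rw [← hi, hpow]
  exact horbit i

end PlaneTree

open Subgroup
open scoped Pointwise

section Group

variable {H : Type*} [Group H]

def Equiv.Perm.IsTranslationLike (e : Perm H) : Prop :=
  (Set.range fun h => h⁻¹ * e h).Finite ∧ ∀ h (n : ℤ), (e ^ n) h = h → n = 0

theorem isTranslationLike_mulRight {t : H} (ht : ¬IsOfFinOrder t) :
    (Equiv.mulRight t).IsTranslationLike := by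
  refine ⟨(Set.finite_singleton t).subset ?_, fun h n hn => ?_⟩
  · rintro _ ⟨h, rfl⟩
    simp
  · rw [zpow_mulRight, coe_mulRight, mul_eq_left] at hn
    exact injective_zpow_iff_not_isOfFinOrder.2 ht (hn.trans (zpow_zero t).symm)

theorem isCycleOn_mulRight_zpowers (t : H) :
    (Equiv.mulRight (⟨t, mem_zpowers t⟩ : zpowers t)).IsCycleOn Set.univ := by
  refine ⟨Set.bijOn_univ.2 (Equiv.bijective _), fun u _ v _ => ?_⟩
  obtain ⟨k, hk⟩ := mem_zpowers_iff.1 (u⁻¹ * v).2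
  refine ⟨k, Subtype.ext ?_⟩
  simp [zpow_mulRight, hk]

theorem exists_mem_pow_of_closure_eq_top {S : Set H} (hS : closure S = ⊤) (hsymm : S⁻¹ = S)
    (h : H) : ∃ k, h ∈ S ^ k := by
  induction (hS ▸ mem_top h : h ∈ closure S) using closure_induction with
  | mem x hx => exact ⟨1, by simpa using hx⟩
  | one => exact ⟨0, by simp⟩
  | mul x y _ _ hx hy =>
    obtain ⟨k, hk⟩ := hx
    obtain ⟨l, hl⟩ := hy
    exact ⟨k + l, pow_add S k l ▸ Set.mul_mem_mul hk hl⟩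
  | inv x _ hx =>
    obtain ⟨k, hk⟩ := hx
    exact ⟨k, by simpa [← inv_pow, hsymm] using Set.inv_mem_inv.2 hk⟩

section CosetTree

variable (K : Subgroup H) (S : Set H)

noncomputable def cosetDepth (q : H ⧸ K) : ℕ := sInf {k | ∃ g ∈ S ^ k, (g : H ⧸ K) = q}

open scoped Classical in
noncomputable def cosetParent (q : H ⧸ K) : H ⧸ K :=
  if h : ∃ c, cosetDepth K S c < cosetDepth K S q ∧ c.out⁻¹ * q.out ∈ (K : Set H) * S * K then
    h.choose
  else q

variable {K S}

theorem cosetDepth_le {g : H} {k : ℕ} (hg : g ∈ S ^ k) : cosetDepth K S g ≤ k :=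
  Nat.sInf_le ⟨g, hg, rfl⟩

variable (hS : closure S = ⊤) (hsymm : S⁻¹ = S)
include hS hsymm

theorem exists_mem_pow_cosetDepth (q : H ⧸ K) : ∃ g ∈ S ^ cosetDepth K S q, (g : H ⧸ K) = q := by
  obtain ⟨k, hk⟩ := exists_mem_pow_of_closure_eq_top hS hsymm q.out
  exact Nat.sInf_mem (s := {k | ∃ g ∈ S ^ k, (g : H ⧸ K) = q}) ⟨k, q.out, hk, q.out_eq'⟩

theorem cosetDepth_eq_zero_iff {q : H ⧸ K} : cosetDepth K S q = 0 ↔ q = ((1 : H) : H ⧸ K) := by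
  refine ⟨fun h => ?_, fun h => Nat.le_zero.1 (h ▸ cosetDepth_le (by simp))⟩
  obtain ⟨g, hg, rfl⟩ := exists_mem_pow_cosetDepth hS hsymm q
  rw [h, pow_zero, Set.mem_one] at hg
  simp [hg]

theorem exists_cosetDepth_lt {q : H ⧸ K} (hq : q ≠ ((1 : H) : H ⧸ K)) :
    ∃ c, cosetDepth K S c < cosetDepth K S q ∧ c.out⁻¹ * q.out ∈ (K : Set H) * S * K := by
  obtain ⟨g, hg, rfl⟩ := exists_mem_pow_cosetDepth hS hsymm q
  obtain ⟨k, hk⟩ := Nat.exists_eq_succ_of_ne_zero ((cosetDepth_eq_zero_iff hS hsymm).not.2 hq)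
  rw [hk, pow_succ] at hg
  obtain ⟨g', hg', s, hs, rfl⟩ := hg
  obtain ⟨u, hu⟩ := QuotientGroup.mk_out_eq_mul K g'
  obtain ⟨v, hv⟩ := QuotientGroup.mk_out_eq_mul K (g' * s)
  refine ⟨g', (cosetDepth_le hg').trans_lt (hk ▸ k.lt_succ_self), ?_⟩
  rw [hu, hv, show (g' * u)⁻¹ * (g' * s * v) = (u : H)⁻¹ * s * v by group]
  exact Set.mul_mem_mul (Set.mul_mem_mul (inv_mem u.2) hs) v.2

theorem cosetParent_spec {q : H ⧸ K} (hq : q ≠ ((1 : H) : H ⧸ K)) :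
    cosetDepth K S (cosetParent K S q) < cosetDepth K S q ∧
      (cosetParent K S q).out⁻¹ * q.out ∈ (K : Set H) * S * K := by
  rw [cosetParent, dif_pos (exists_cosetDepth_lt hS hsymm hq)]
  exact (exists_cosetDepth_lt hS hsymm hq).choose_spec

theorem exists_iterate_cosetParent_eq_one (q : H ⧸ K) :
    ∃ k, (cosetParent K S)^[k] q = ((1 : H) : H ⧸ K) := by
  induction h : cosetDepth K S q using Nat.strong_induction_on generalizing q with
  | _ d ih =>
    by_cases hq : q = ((1 : H) : H ⧸ K)
    · exact ⟨0, hq⟩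
    obtain ⟨k, hk⟩ := ih _ (h ▸ (cosetParent_spec hS hsymm hq).1) (cosetParent K S q) rfl
    exact ⟨k + 1, hk⟩

theorem finite_setOf_cosetParent_eq (hK : (K : Set H).Finite) (hSfin : S.Finite) (q : H ⧸ K) :
    {c | c ≠ ((1 : H) : H ⧸ K) ∧ cosetParent K S c = q}.Finite := by
  refine (((hK.mul hSfin).mul hK).image fun x => ((q.out * x : H) : H ⧸ K)).subset ?_
  rintro c ⟨hc, rfl⟩
  exact ⟨_, (cosetParent_spec hS hsymm hc).2, by simp⟩

noncomputable def cosetTree [LinearOrder (H ⧸ K)] (hK : (K : Set H).Finite) (hSfin : S.Finite)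
    (hord : ∀ a b : H ⧸ K, cosetDepth K S a < cosetDepth K S b → a < b) : PlaneTree (H ⧸ K) where
  parent := cosetParent K S
  children q := (finite_setOf_cosetParent_eq hS hsymm hK hSfin q).toFinset
  parent_eq_of_mem_children h := (Set.Finite.mem_toFinset _).1 h |>.2
  lt_of_mem_children h := by
    obtain ⟨hc, rfl⟩ := (Set.Finite.mem_toFinset _).1 h
    exact hord _ _ (cosetParent_spec hS hsymm hc).1
  root := ((1 : H) : H ⧸ K)
  mem_children_parent_iff := by simp
  exists_iterate_parent_eq_root := exists_iterate_cosetParent_eq_one hS hsymm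

theorem out_inv_mul_out_mem_of_mem_cosetTree_children [LinearOrder (H ⧸ K)]
    (hK : (K : Set H).Finite) (hSfin : S.Finite) (hord) {q c : H ⧸ K}
    (hc : c ∈ (cosetTree hS hsymm hK hSfin hord).children q) :
    q.out⁻¹ * c.out ∈ (K : Set H) * S * K := by
  obtain ⟨hc1, rfl⟩ := (Set.Finite.mem_toFinset _).1 hc
  exact (cosetParent_spec hS hsymm hc1).2

end CosetTree

noncomputable def quotientProdEquiv (K : Subgroup H) : (H ⧸ K) × K ≃ H where
  toFun x := x.1.out * x.2
  invFun h := (h, ⟨(h : H ⧸ K).out⁻¹ * h, QuotientGroup.eq.1 (QuotientGroup.out_eq' _)⟩)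
  left_inv := by
    rintro ⟨q, u⟩
    have hq : ((q.out * u : H) : H ⧸ K) = q := by
      rw [QuotientGroup.mk_mul_of_mem _ u.2, QuotientGroup.out_eq']
    ext <;> simp [hq]
  right_inv h := by simp

theorem quotientProdEquiv_apply {K : Subgroup H} (x : (H ⧸ K) × K) :
    quotientProdEquiv K x = x.1.out * x.2 := rfl

theorem quotientProdEquiv_tour_displacement_mem {K : Subgroup H} [LinearOrder (H ⧸ K)]
    [DecidableEq K] (F : PlaneForest (H ⧸ K)) {B : Set H}
    (hB : ∀ q c, c ∈ F.children q → q.out⁻¹ * c.out ∈ B)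
    (g : K) {z₀ z₁ : K} (hz : z₀ ≠ z₁) (x : (H ⧸ K) × K) :
    (quotientProdEquiv K x)⁻¹ * quotientProdEquiv K (F.tour (Equiv.mulRight g) hz x) ∈
      ((K : Set H) ∪ B * K)⁻¹ * ((K : Set H) ∪ B * K) * K := by
  set co := quotientProdEquiv K
  have hN : ∀ q y, y ∈ F.corners z₀ z₁ q → q.out⁻¹ * co y ∈ (K : Set H) ∪ B * K := by
    rintro q ⟨c, z⟩ hy
    rcases F.mem_corners.1 hy with h | ⟨rfl, hc⟩
    · obtain ⟨rfl, rfl⟩ := Prod.ext_iff.1 h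
      exact .inl (by simp [co, quotientProdEquiv_apply])
    · refine .inr ?_
      rw [quotientProdEquiv_apply, ← mul_assoc]
      exact Set.mul_mem_mul (hB q c hc) z.2
  have htour : co (F.tour (Equiv.mulRight g) hz x) = co (F.rotation hz x) * g :=
    (mul_assoc _ _ _).symm
  rw [htour]
  rcases F.rotation_apply_eq_or_mem hz x with h | ⟨hx, hρx⟩
  · have h1 : (1 : H) ∈ (K : Set H) ∪ B * K := .inl K.one_mem
    rw [h, inv_mul_cancel_left]
    simpa using Set.mul_mem_mul (Set.mul_mem_mul (Set.inv_mem_inv.2 h1) h1) g.2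
  · rw [show (co x)⁻¹ * (co (F.rotation hz x) * g) =
      ((F.owner z₁ x).out⁻¹ * co x)⁻¹ * ((F.owner z₁ x).out⁻¹ * co (F.rotation hz x)) * g by group]
    exact Set.mul_mem_mul (Set.mul_mem_mul (Set.inv_mem_inv.2 (hN _ _ hx)) (hN _ _ hρx)) g.2

theorem exists_isTranslationLike_of_isOfFinOrder [Infinite H] {S : Set H} (hS : closure S = ⊤)
    (hsymm : S⁻¹ = S) (hSfin : S.Finite) {t : H} (ht : IsOfFinOrder t) (ht1 : t ≠ 1) :
    ∃ e : Perm H, e.IsTranslationLike := by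
  classical
  set K := zpowers t
  have hK : (K : Set H).Finite := ht.finite_zpowers
  have : Fintype K := hK.fintype
  have : Infinite (H ⧸ K) := not_finite_iff_infinite.1 fun _ =>
    not_finite_iff_infinite.2 ‹Infinite H› (Finite.of_subgroup_quotient K)
  -- ordered by depth, ties broken by an arbitrary injection into a linear order
  let : LinearOrder (H ⧸ K) :=
    LinearOrder.lift' (fun q => toLex (cosetDepth K S q, embeddingToCardinal q))
      fun a b h => embeddingToCardinal.injective (congrArg (fun x => (ofLex x).2) h)
  set tree := cosetTree hS hsymm hK hSfin fun a b h => Prod.Lex.toLex_lt_toLex.2 (.inl h)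
  have hz : (1 : K) ≠ ⟨t, mem_zpowers t⟩ := fun h => ht1 (congrArg Subtype.val h).symm
  have hB : ∀ q c, c ∈ tree.children q → q.out⁻¹ * c.out ∈ (K : Set H) * S * K :=
    fun q c hc => out_inv_mul_out_mem_of_mem_cosetTree_children hS hsymm hK hSfin _ hc
  refine ⟨(quotientProdEquiv K).permCongr (tree.tour (Equiv.mulRight ⟨t, mem_zpowers t⟩) hz), ?_,
    fun h n hn => ?_⟩
  · have hN := hK.union ((hK.mul hSfin).mul hK |>.mul hK)
    refine ((hN.inv.mul hN).mul hK).subset ?_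
    rintro _ ⟨h, rfl⟩
    simpa [Equiv.permCongr_apply] using quotientProdEquiv_tour_displacement_mem tree.toPlaneForest
      hB ⟨t, mem_zpowers t⟩ hz ((quotientProdEquiv K).symm h)
  · rw [← Equiv.permCongrHom_coe, ← map_zpow, Equiv.permCongrHom_coe, Equiv.permCongr_apply,
      ← Equiv.eq_symm_apply] at hn
    exact Perm.eq_zero_of_zpow_apply_eq_self
      (fun x k hk => tree.tour_pow_apply_ne (isCycleOn_mulRight_zpowers t) hz x hk) hn

theorem exists_isTranslationLike [Infinite H] {S : Set H} (hS : closure S = ⊤) (hSfin : S.Finite) :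
    ∃ e : Perm H, e.IsTranslationLike := by
  by_cases h : ∀ t : H, IsOfFinOrder t
  · obtain ⟨t, ht1⟩ := exists_ne (1 : H)
    refine exists_isTranslationLike_of_isOfFinOrder (S := S ∪ S⁻¹)
      (eq_top_iff.2 (hS ▸ closure_mono Set.subset_union_left)) ?_ (hSfin.union hSfin.inv) (h t) ht1
    rw [Set.union_inv, inv_inv, Set.union_comm]
  · obtain ⟨t, ht⟩ := not_forall.1 h
    exact ⟨_, isTranslationLike_mulRight ht⟩

theorem exists_generating_config_of_isTranslationLike {T : Finset H}
    (hT : closure (T : Set H) = ⊤) {e : Perm H} (he : e.IsTranslationLike) :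
    ∃ (S : Finset H) (ω : H → ↥S × ↥S),
      (∀ x ∈ S, x⁻¹ ∈ S) ∧ (1 : H) ∈ S ∧ closure (S : Set H) = ⊤ ∧
      (∀ h : H, ((ω (h * ((ω h).2 : H))).1 : H) = (((ω h).2 : H))⁻¹) ∧
      (∀ h : H, ((ω (h * ((ω h).1 : H))).2 : H) = (((ω h).1 : H))⁻¹) ∧
      ∃ e : Equiv.Perm H, (∀ h : H, e h = h * ((ω h).2 : H)) ∧
        ∀ (h : H) (n : ℤ), (e ^ n) h = h → n = 0 := by
  classical
  set A := T ∪ he.1.toFinset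
  set S := insert 1 (A ∪ A⁻¹)
  have hA : ∀ x ∈ A, x ∈ S ∧ x⁻¹ ∈ S := fun x hx => by simp [S, hx]
  have hright : ∀ h, h⁻¹ * e h ∈ S := fun h => (hA _ (by simp [A])).1
  have hleft : ∀ h, h⁻¹ * e.symm h ∈ S := fun h => by
    have : (e.symm h)⁻¹ * e (e.symm h) ∈ A := mem_union_right _ (he.1.mem_toFinset.2 ⟨_, rfl⟩)
    simpa using (hA _ this).2
  refine ⟨S, fun h => (⟨_, hleft h⟩, ⟨_, hright h⟩), fun x hx => ?_, mem_insert_self _ _, ?_,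
    fun h => ?_, fun h => ?_, e, fun h => (mul_inv_cancel_left h (e h)).symm, he.2⟩
  · simp only [S, mem_insert, mem_union, Finset.mem_inv', inv_inv, inv_eq_one] at hx ⊢
    tauto
  · exact eq_top_iff.2 (hT ▸ closure_mono (coe_subset.2 fun x hx => (hA x (mem_union_left _ hx)).1))
  · simp
  · simp

end Group

/-- **Proposition 3.5** (`proposition_ofseward`). Every infinite, finitely generated
group `H` admits a finite symmetric generating set `S ∋ 1` and a configuration
`ω : H → S × S` whose left/right labels are compatible (so that `R h = h * right h`
and `L h = h * left h` are mutually inverse bijections of `H`) and whose induced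
`ℤ`-action `n ↦ Rⁿ` is free. -/
theorem stmt8 {H : Type} [Group H] [Infinite H] (hfg : Group.FG H) :
    ∃ (S : Finset H) (ω : H → ↥S × ↥S),
      -- S is symmetric, contains 1 and generates H
      (∀ x ∈ S, x⁻¹ ∈ S) ∧ (1 : H) ∈ S ∧ Subgroup.closure (S : Set H) = ⊤ ∧
      -- (a) compatibility of the left and right labels
      (∀ h : H, ((ω (h * ((ω h).2 : H))).1 : H) = (((ω h).2 : H))⁻¹) ∧
      (∀ h : H, ((ω (h * ((ω h).1 : H))).2 : H) = (((ω h).1 : H))⁻¹) ∧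
      -- (b) R is a bijection (an element of `Equiv.Perm H`) whose ℤ-action is free
      ∃ e : Equiv.Perm H, (∀ h : H, e h = h * ((ω h).2 : H)) ∧
        ∀ (h : H) (n : ℤ), (e ^ n) h = h → n = 0 := by
  obtain ⟨T, hT⟩ := hfg.out
  obtain ⟨e, he⟩ := exists_isTranslationLike hT T.finite_toSet
  exact exists_generating_config_of_isTranslationLike hT he
end

section
/- Let H₁ and H₂ be groups with finite symmetric generating sets S₁ ∋ 1_{H₁} and S₂ ∋ 1_{H₂}. For i ∈ {1,2}, let ω_i : H_i → S_i × S_i, with components (left_i, right_i), satisfy left_i(h · right_i(h)) = right_i(h)⁻¹ and right_i(h · left_i(h)) = left_i(h)⁻¹ for all h ∈ H_i, so that R_i(h) := h · right_i(h) is a bijection of H_i, and assume each induced ℤ-action is free (R_iⁿ(h) = h implies n = 0). Let A be a finite alphabet, Y ⊆ A^{ℤ²} a ℤ²-subshift, and c ∈ Y. Then there exists y : H₁ × H₂ → A such that for every (h₁,h₂) ∈ H₁ × H₂ the configuration ℤ² → A given by (z₁,z₂) ↦ y(R₁^{z₁}(h₁), R₂^{z₂}(h₂)) belongs to the shift-orbit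 of c, and for (h₁,h₂) = (1_{H₁},1_{H₂}) this configuration equals c. -/
/-- The shift action of `ℤ²` on configurations: `(shift2 z x) w = x (w - z)`. -/
def shift2 {A : Type} (z : ℤ × ℤ) (x : ℤ × ℤ → A) : ℤ × ℤ → A :=
  fun w => x (w - z)

/-- A `ℤ²`-subshift of finite type: the set of configurations avoiding a finite set
of forbidden patterns. -/
def IsSFT2 {A : Type} (X : Set (ℤ × ℤ → A)) : Prop :=
  ∃ (n : ℕ) (F : Fin n → Finset (ℤ × ℤ)) (p : (i : Fin n) → (F i → A)),
    X = {x | ∀ (i : Fin n) (z : ℤ × ℤ), ¬ ∀ h : F i, x (z + h) = p i h}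

/-- A sofic `ℤ²`-subshift: the image of a `ℤ²`-SFT under a continuous
shift-equivariant map. -/
def IsSofic2 {A : Type} [TopologicalSpace A] (Y : Set (ℤ × ℤ → A)) : Prop :=
  ∃ (m : ℕ) (X : Set (ℤ × ℤ → Fin m)) (φ : (ℤ × ℤ → Fin m) → (ℤ × ℤ → A)),
    IsSFT2 X ∧ Continuous φ ∧
    (∀ (z : ℤ × ℤ) (x : ℤ × ℤ → Fin m), φ (shift2 z x) = shift2 z (φ x)) ∧ φ '' X = Y

/-!
The maps `(z, (h₁, h₂)) ↦ (R₁^{z₁} h₁, R₂^{z₂} h₂)` form a free action of `ℤ²` on `H₁ × H₂`.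
Choosing a base point in every orbit, the identity in its own, every point is `z +ᵥ b` for a
unique `z`; this coordinate `θ : H₁ × H₂ → ℤ²` is equivariant and vanishes at `1`, so
`y := c ∘ θ` reads a translate of `c` along every grid and `c` itself along the grid at `1`.
-/

namespace AddAction

variable {G X : Type*} [AddGroup G] [AddAction G X]

theorem vadd_left_injective_of_free (hfree : ∀ (g : G) (x : X), g +ᵥ x = x → g = 0) (x : X) :
    Function.Injective (· +ᵥ x : G → X) := by
  intro g h hgh
  have : (-h + g) +ᵥ x = x := by
    rw [add_vadd]
    exact neg_vadd_eq_iff.2 hgh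
  exact (neg_add_eq_zero.1 (hfree _ _ this)).symm

theorem exists_equivariant_coord_of_free (hfree : ∀ (g : G) (x : X), g +ᵥ x = x → g = 0)
    (x₀ : X) : ∃ θ : X → G, (∀ (g : G) (x : X), θ (g +ᵥ x) = g + θ x) ∧ θ x₀ = 0 := by
  classical
  let base : orbitRel.Quotient G X → X := Function.update Quotient.out ⟦x₀⟧ x₀
  have base_x₀ : base ⟦x₀⟧ = x₀ := Function.update_self ..
  have mk_base : ∀ q, (⟦base q⟧ : orbitRel.Quotient G X) = q := by
    intro q
    by_cases hq : q = ⟦x₀⟧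
    · rw [hq, base_x₀]
    · simp only [base, Function.update_of_ne hq, Quotient.out_eq]
  have mem_orbit_base : ∀ x : X, ∃ g : G, g +ᵥ base ⟦x⟧ = x := fun x =>
    mem_orbit_symm.1 (Quotient.exact (mk_base ⟦x⟧))
  choose θ hθ using mem_orbit_base
  refine ⟨θ, fun g x => vadd_left_injective_of_free hfree (base ⟦x⟧) ?_, ?_⟩
  · calc θ (g +ᵥ x) +ᵥ base ⟦x⟧ = θ (g +ᵥ x) +ᵥ base ⟦g +ᵥ x⟧ := by
          rw [orbitRel.Quotient.quotient_vadd_eq]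
      _ = g +ᵥ θ x +ᵥ base ⟦x⟧ := by rw [hθ, hθ]
      _ = (g + θ x) +ᵥ base ⟦x⟧ := (add_vadd ..).symm
  · apply hfree _ x₀
    simpa only [base_x₀] using hθ x₀

end AddAction

namespace Equiv.Perm

variable {α β : Type*}

abbrev prodZPowAddAction (e₁ : Perm α) (e₂ : Perm β) : AddAction (ℤ × ℤ) (α × β) where
  vadd z x := ((e₁ ^ z.1) x.1, (e₂ ^ z.2) x.2)
  zero_vadd x := by
    change ((e₁ ^ (0 : ℤ)) x.1, (e₂ ^ (0 : ℤ)) x.2) = x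
    simp
  add_vadd z w x := by
    change ((e₁ ^ (z.1 + w.1)) x.1, (e₂ ^ (z.2 + w.2)) x.2) =
      ((e₁ ^ z.1) ((e₁ ^ w.1) x.1), (e₂ ^ z.2) ((e₂ ^ w.2) x.2))
    simp only [zpow_add, Perm.mul_apply]

theorem prodZPowAddAction_free {e₁ : Perm α} {e₂ : Perm β}
    (hfree₁ : ∀ (a : α) (n : ℤ), (e₁ ^ n) a = a → n = 0)
    (hfree₂ : ∀ (b : β) (n : ℤ), (e₂ ^ n) b = b → n = 0) :
    letI := prodZPowAddAction e₁ e₂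
    ∀ (z : ℤ × ℤ) (x : α × β), z +ᵥ x = x → z = 0 := fun _ _ h =>
  Prod.ext (hfree₁ _ _ (congrArg Prod.fst h)) (hfree₂ _ _ (congrArg Prod.snd h))

end Equiv.Perm

theorem stmt9_general {H₁ H₂ : Type} [Group H₁] [Group H₂]
    (e₁ : Equiv.Perm H₁) (e₂ : Equiv.Perm H₂)
    (hfree₁ : ∀ (h : H₁) (n : ℤ), (e₁ ^ n) h = h → n = 0)
    (hfree₂ : ∀ (h : H₂) (n : ℤ), (e₂ ^ n) h = h → n = 0)
    {A : Type} (c : ℤ × ℤ → A) :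
    ∃ y : H₁ × H₂ → A,
      (∀ (h₁ : H₁) (h₂ : H₂), ∃ z : ℤ × ℤ,
        (fun w : ℤ × ℤ => y ((e₁ ^ w.1) h₁, (e₂ ^ w.2) h₂)) = shift2 z c) ∧
      (fun w : ℤ × ℤ => y ((e₁ ^ w.1) 1, (e₂ ^ w.2) 1)) = c := by
  let := Equiv.Perm.prodZPowAddAction e₁ e₂
  obtain ⟨θ, hθ, hθ_one⟩ := AddAction.exists_equivariant_coord_of_free
    (Equiv.Perm.prodZPowAddAction_free hfree₁ hfree₂) (1 : H₁ × H₂)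
  refine ⟨c ∘ θ, fun h₁ h₂ => ⟨-θ (h₁, h₂), funext fun w => ?_⟩, funext fun w => ?_⟩
  · change c (θ (w +ᵥ (h₁, h₂))) = c (w - -θ (h₁, h₂))
    rw [hθ, sub_neg_eq_add]
  · change c (θ (w +ᵥ (1 : H₁ × H₂))) = c w
    rw [hθ, hθ_one, add_zero]

/-- **Proposition 3.7** (`propo_relacion`). Given groups `H₁, H₂` with finite symmetric
generating sets `S₁ ∋ 1`, `S₂ ∋ 1`, grid configurations `ωᵢ : Hᵢ → Sᵢ × Sᵢ` with
compatible labels inducing free `ℤ`-actions `Rᵢ` (packaged as permutations `eᵢ`), a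
`ℤ²`-subshift `Y ⊆ A^{ℤ²}` and `c ∈ Y`, there is `y : H₁ × H₂ → A` such that reading
`y` along every simulated grid yields an element of the shift-orbit of `c`, the grid
based at the identity yielding `c` itself. -/
theorem stmt9 {H₁ H₂ : Type} [Group H₁] [Group H₂]
    (S₁ : Finset H₁) (S₂ : Finset H₂)
    (hone₁ : (1 : H₁) ∈ S₁) (hone₂ : (1 : H₂) ∈ S₂)
    (hsym₁ : ∀ x ∈ S₁, x⁻¹ ∈ S₁) (hsym₂ : ∀ x ∈ S₂, x⁻¹ ∈ S₂)
    (hgen₁ : Subgroup.closure (S₁ : Set H₁) = ⊤)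
    (hgen₂ : Subgroup.closure (S₂ : Set H₂) = ⊤)
    (ω₁ : H₁ → ↥S₁ × ↥S₁) (ω₂ : H₂ → ↥S₂ × ↥S₂)
    (hcomp₁ : ∀ h : H₁, ((ω₁ (h * ((ω₁ h).2 : H₁))).1 : H₁) = (((ω₁ h).2 : H₁))⁻¹)
    (hcomp₁' : ∀ h : H₁, ((ω₁ (h * ((ω₁ h).1 : H₁))).2 : H₁) = (((ω₁ h).1 : H₁))⁻¹)
    (hcomp₂ : ∀ h : H₂, ((ω₂ (h * ((ω₂ h).2 : H₂))).1 : H₂) = (((ω₂ h).2 : H₂))⁻¹)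
    (hcomp₂' : ∀ h : H₂, ((ω₂ (h * ((ω₂ h).1 : H₂))).2 : H₂) = (((ω₂ h).1 : H₂))⁻¹)
    (e₁ : Equiv.Perm H₁) (he₁ : ∀ h : H₁, e₁ h = h * ((ω₁ h).2 : H₁))
    (e₂ : Equiv.Perm H₂) (he₂ : ∀ h : H₂, e₂ h = h * ((ω₂ h).2 : H₂))
    (hfree₁ : ∀ (h : H₁) (n : ℤ), (e₁ ^ n) h = h → n = 0)
    (hfree₂ : ∀ (h : H₂) (n : ℤ), (e₂ ^ n) h = h → n = 0)
    {A : Type} [Fintype A] [TopologicalSpace A] [DiscreteTopology A]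
    (Y : Set (ℤ × ℤ → A)) (hYclosed : IsClosed Y)
    (hYinv : ∀ z : ℤ × ℤ, shift2 z '' Y ⊆ Y)
    (c : ℤ × ℤ → A) (hc : c ∈ Y) :
    ∃ y : H₁ × H₂ → A,
      (∀ (h₁ : H₁) (h₂ : H₂), ∃ z : ℤ × ℤ,
        (fun w : ℤ × ℤ => y ((e₁ ^ w.1) h₁, (e₂ ^ w.2) h₂)) = shift2 z c) ∧
      (fun w : ℤ × ℤ => y ((e₁ ^ w.1) 1, (e₂ ^ w.2) 1)) = c :=
  stmt9_general e₁ e₂ hfree₁ hfree₂ c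
end

section
/- Define Ψ : {0,1}^ℕ → {0,1,□}^ℤ by Ψ(x)(j) = x_n if j ≡ 3ⁿ (mod 3^{n+1}) for some n ∈ ℕ, and Ψ(x)(j) = □ otherwise. Then: (0) for each j ∈ ℤ there is at most one n ∈ ℕ with j ≡ 3ⁿ (mod 3^{n+1}), so Ψ is well defined; and for every x ∈ {0,1}^ℕ and every j ∈ ℤ: (1) Ψ(x)(3j) = Ψ(σ(x))(j), where σ(x) is the one-sided shift σ(x)_i = x_{i+1}; (2) Ψ(x)(3j+1) = x_0; (3) Ψ(x)(3j+2) = □. -/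
/-!
A residue `j ≡ pⁿ (mod pⁿ⁺¹)` pins down `n` as the `p`-adic valuation of `j`, so the level `n`
is unique. Multiplying by `3` raises the level by one and never produces level `0`, which gives
the shift identity; modulo `3` every level-`n` residue is `0` or `1`, with `1` exactly at
level `0`, which gives the two remaining identities.
-/

open Classical

/-- The Toeplitz-like encoding `Ψ : {0,1}^ℕ → {0,1,□}^ℤ` (with `□ = none`):
`Ψ(x)(j) = x n` if `j ≡ 3ⁿ (mod 3^(n+1))` for (the necessarily unique) `n`, and
`Ψ(x)(j) = □` otherwise. -/
noncomputable def Psi (x : ℕ → Bool) (j : ℤ) : Option Bool :=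
  if h : ∃ n : ℕ, j ≡ 3 ^ n [ZMOD 3 ^ (n + 1)] then some (x h.choose) else none

namespace Int

variable {p j : ℤ} {n m : ℕ}

theorem le_of_modEq_pow_of_modEq_pow (hp₀ : p ≠ 0) (hp : ¬IsUnit p)
    (hn : j ≡ p ^ n [ZMOD p ^ (n + 1)]) (hm : j ≡ p ^ m [ZMOD p ^ (m + 1)]) : n ≤ m := by
  by_contra! hlt
  have hpow : p ^ m ≡ p ^ n [ZMOD p ^ (m + 1)] :=
    hm.symm.trans (hn.of_dvd (pow_dvd_pow p (by omega)))
  have hdvd : p ^ (m + 1) ∣ p ^ m := by simpa using dvd_sub (pow_dvd_pow p hlt) hpow.dvd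
  exact absurd ((_root_.pow_dvd_pow_iff hp₀ hp).mp hdvd) (by omega)

theorem eq_of_modEq_pow_of_modEq_pow (hp₀ : p ≠ 0) (hp : ¬IsUnit p)
    (hn : j ≡ p ^ n [ZMOD p ^ (n + 1)]) (hm : j ≡ p ^ m [ZMOD p ^ (m + 1)]) : n = m :=
  (le_of_modEq_pow_of_modEq_pow hp₀ hp hn hm).antisymm
    (le_of_modEq_pow_of_modEq_pow hp₀ hp hm hn)

theorem mul_modEq_pow_succ_iff (hp₀ : p ≠ 0) :
    p * j ≡ p ^ (n + 1) [ZMOD p ^ (n + 1 + 1)] ↔ j ≡ p ^ n [ZMOD p ^ (n + 1)] := by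
  rw [pow_succ' p (n + 1), pow_succ' p n]
  exact ModEq.mul_left_cancel_iff' hp₀

end Int

theorem eq_of_modEq_three_pow {j : ℤ} {n m : ℕ} (hn : j ≡ 3 ^ n [ZMOD 3 ^ (n + 1)])
    (hm : j ≡ 3 ^ m [ZMOD 3 ^ (m + 1)]) : n = m :=
  Int.eq_of_modEq_pow_of_modEq_pow three_ne_zero (by norm_num [Int.isUnit_iff]) hn hm

theorem psi_eq_some (x : ℕ → Bool) {j : ℤ} {n : ℕ} (h : j ≡ 3 ^ n [ZMOD 3 ^ (n + 1)]) :
    Psi x j = some (x n) := by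
  have hex : ∃ m : ℕ, j ≡ 3 ^ m [ZMOD 3 ^ (m + 1)] := ⟨n, h⟩
  rw [Psi, dif_pos hex, eq_of_modEq_three_pow hex.choose_spec h]

theorem psi_eq_none (x : ℕ → Bool) {j : ℤ} (h : ¬∃ n : ℕ, j ≡ 3 ^ n [ZMOD 3 ^ (n + 1)]) :
    Psi x j = none :=
  dif_neg h

theorem exists_three_mul_modEq_three_pow_iff (j : ℤ) :
    (∃ n : ℕ, 3 * j ≡ 3 ^ n [ZMOD 3 ^ (n + 1)]) ↔ ∃ n : ℕ, j ≡ 3 ^ n [ZMOD 3 ^ (n + 1)] := by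
  constructor
  · rintro ⟨_ | n, h⟩
    · exact absurd h (by simp [Int.ModEq])
    · exact ⟨n, (Int.mul_modEq_pow_succ_iff three_ne_zero).mp h⟩
  · rintro ⟨n, h⟩
    exact ⟨n + 1, (Int.mul_modEq_pow_succ_iff three_ne_zero).mpr h⟩

theorem psi_three_mul (x : ℕ → Bool) (j : ℤ) : Psi x (3 * j) = Psi (fun i => x (i + 1)) j := by
  by_cases h : ∃ n : ℕ, j ≡ 3 ^ n [ZMOD 3 ^ (n + 1)]
  · obtain ⟨n, hn⟩ := h
    rw [psi_eq_some _ hn, psi_eq_some x ((Int.mul_modEq_pow_succ_iff three_ne_zero).mpr hn)]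
  · rw [psi_eq_none _ h, psi_eq_none x ((exists_three_mul_modEq_three_pow_iff j).not.mpr h)]

theorem psi_three_mul_add_one (x : ℕ → Bool) (j : ℤ) : Psi x (3 * j + 1) = some (x 0) :=
  psi_eq_some x (n := 0) (by simp [Int.ModEq])

theorem psi_three_mul_add_two (x : ℕ → Bool) (j : ℤ) : Psi x (3 * j + 2) = none := by
  refine psi_eq_none x fun ⟨n, h⟩ => ?_
  have h3 : 3 * j + 2 ≡ 3 ^ n [ZMOD 3] := h.of_dvd (dvd_pow_self 3 n.succ_ne_zero)
  cases n with
  | zero => simp [Int.ModEq] at h3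
  | succ n => simp [Int.ModEq, pow_succ] at h3

/-- Basic properties of the encoding `Ψ`: (0) for each `j ∈ ℤ` there is at most one
`n` with `j ≡ 3ⁿ (mod 3^(n+1))`, so `Ψ` is well defined and satisfies its defining
specification; moreover for all `x` and `j`: (1) `Ψ(x)(3j) = Ψ(σ(x))(j)` where `σ` is
the one-sided shift; (2) `Ψ(x)(3j+1) = x 0`; (3) `Ψ(x)(3j+2) = □`. -/
theorem stmt14 :
    (∀ (j : ℤ) (n n' : ℕ),
      j ≡ 3 ^ n [ZMOD 3 ^ (n + 1)] → j ≡ 3 ^ n' [ZMOD 3 ^ (n' + 1)] → n = n') ∧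
    (∀ (x : ℕ → Bool) (j : ℤ) (n : ℕ),
      j ≡ 3 ^ n [ZMOD 3 ^ (n + 1)] → Psi x j = some (x n)) ∧
    (∀ (x : ℕ → Bool) (j : ℤ),
      (¬ ∃ n : ℕ, j ≡ 3 ^ n [ZMOD 3 ^ (n + 1)]) → Psi x j = none) ∧
    (∀ (x : ℕ → Bool) (j : ℤ),
      Psi x (3 * j) = Psi (fun i => x (i + 1)) j ∧
      Psi x (3 * j + 1) = some (x 0) ∧
      Psi x (3 * j + 2) = none) :=
  ⟨fun _ _ _ => eq_of_modEq_three_pow,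
    fun x _ _ => psi_eq_some x, fun x _ => psi_eq_none x,
    fun x j => ⟨psi_three_mul x j, psi_three_mul_add_one x j, psi_three_mul_add_two x j⟩⟩
end

section
/- Let G₁, G₂, G₃ be groups and G = G₁ × G₂ × G₃. For i ∈ {1,2,3}, let A_i be a finite alphabet and X_i ⊆ A_i^G a G-subshift such that: (a) every x ∈ X_i is fixed by the shift by every element of the two factors other than G_i (e.g. for i = 1, σ^{(1,g₂,g₃)}(x) = x for all g₂ ∈ G₂, g₃ ∈ G₃); and (b) the G_i-subaction on X_i is free (e.g. for i = 1, σ^{(g₁,1,1)}(x) = x for some x ∈ X₁ implies g₁ = 1). Then the product subshift X₁ × X₂ × X₃ ⊆ (A₁ × A₂ × A₃)^G, consisting of all x with each coordinate projection in the corresponding X_i, is strongly aperiodic: σ^g(x) = x for some x ∈ X₁ × X₂ × X₃ implies g = 1_G. -/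
/-- The shift action of a group `G` on configurations `x : G → A`:
`(shift h x) g = x (h⁻¹ * g)`. -/
def shift {G A : Type} [Group G] (h : G) (x : G → A) : G → A :=
  fun g => x (h⁻¹ * g)

/-- A set of configurations is a subshift of finite type if it is the set of
configurations avoiding a finite set of forbidden patterns. -/
def IsSFT {G A : Type} [Group G] (X : Set (G → A)) : Prop :=
  ∃ (n : ℕ) (F : Fin n → Finset G) (p : (i : Fin n) → (F i → A)),
    X = {x | ∀ (i : Fin n) (g : G), ¬ ∀ h : F i, x (g * h) = p i h}

/-- A subshift: a closed, shift-invariant set of configurations. -/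
def IsSubshift {G A : Type} [Group G] [TopologicalSpace A] (X : Set (G → A)) : Prop :=
  IsClosed X ∧ ∀ g : G, shift g '' X ⊆ X

/-- A sofic subshift: the image of a subshift of finite type (over some finite
alphabet, wlog `Fin m`) under a continuous shift-equivariant map. -/
def IsSofic {G A : Type} [Group G] [TopologicalSpace A] (Y : Set (G → A)) : Prop :=
  ∃ (m : ℕ) (X : Set (G → Fin m)) (φ : (G → Fin m) → (G → A)),
    IsSFT X ∧ Continuous φ ∧
    (∀ (h : G) (x : G → Fin m), φ (shift h x) = shift h (φ x)) ∧ φ '' X = Y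

/-- A set of configurations is strongly aperiodic if the shift action on it is free. -/
def StronglyAperiodic {G A : Type} [Group G] (X : Set (G → A)) : Prop :=
  ∀ x ∈ X, ∀ g : G, shift g x = x → g = 1

/-- Evaluation of a word over the alphabet `S ∪ S⁻¹` (letters `(i, b)` with `b = true`
standing for `(s i)⁻¹`) in the group `G`. -/
def wordEval {G : Type} [Group G] {k : ℕ} (s : Fin k → G) (w : List (Fin k × Bool)) : G :=
  (w.map fun p => if p.2 then (s p.1)⁻¹ else s p.1).prod

/-!
If `σ^g` fixes `x = (x₁, x₂, x₃)`, it fixes every coordinate `xᵢ`. Multiplying `g` by the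
inverses of its components outside `Gᵢ`, which fix `xᵢ` by (a), leaves the element of `Gᵢ`
given by the `i`-th component of `g`; it still fixes `xᵢ`, so by (b) it is trivial.
-/

section Shift

variable {G A B : Type} [Group G]

theorem shift_mul (a b : G) (x : G → A) : shift a (shift b x) = shift (a * b) x := by
  funext g
  simp [shift, mul_assoc]

theorem shift_mul_eq_self {a b : G} {x : G → A} (ha : shift a x = x) (hb : shift b x = x) :
    shift (a * b) x = x := by
  rw [← shift_mul, hb, ha]

theorem shift_comp_eq_self (f : A → B) {g : G} {x : G → A} (hx : shift g x = x) :
    shift g (fun h => f (x h)) = fun h => f (x h) :=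
  congrArg (f ∘ ·) hx

end Shift

theorem stmt16_general {G₁ G₂ G₃ : Type} [Group G₁] [Group G₂] [Group G₃]
    {A₁ A₂ A₃ : Type}
    (X₁ : Set ((G₁ × G₂ × G₃) → A₁)) (X₂ : Set ((G₁ × G₂ × G₃) → A₂))
    (X₃ : Set ((G₁ × G₂ × G₃) → A₃))
    -- (a) each Xᵢ is fixed by the shift by elements of the other two factors
    (hfix₁ : ∀ x ∈ X₁, ∀ (g₂ : G₂) (g₃ : G₃), shift ((1 : G₁), g₂, g₃) x = x)
    (hfix₂ : ∀ x ∈ X₂, ∀ (g₁ : G₁) (g₃ : G₃), shift (g₁, (1 : G₂), g₃) x = x)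
    (hfix₃ : ∀ x ∈ X₃, ∀ (g₁ : G₁) (g₂ : G₂), shift (g₁, g₂, (1 : G₃)) x = x)
    -- (b) the Gᵢ-subaction on Xᵢ is free
    (hfree₁ : ∀ x ∈ X₁, ∀ g₁ : G₁, shift (g₁, (1 : G₂), (1 : G₃)) x = x → g₁ = 1)
    (hfree₂ : ∀ x ∈ X₂, ∀ g₂ : G₂, shift ((1 : G₁), g₂, (1 : G₃)) x = x → g₂ = 1)
    (hfree₃ : ∀ x ∈ X₃, ∀ g₃ : G₃, shift ((1 : G₁), (1 : G₂), g₃) x = x → g₃ = 1) :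
    StronglyAperiodic {x : (G₁ × G₂ × G₃) → A₁ × A₂ × A₃ |
      (fun g => (x g).1) ∈ X₁ ∧ (fun g => (x g).2.1) ∈ X₂ ∧ (fun g => (x g).2.2) ∈ X₃} := by
  rintro x ⟨hx₁, hx₂, hx₃⟩ ⟨g₁, g₂, g₃⟩ hx
  have hg₁ : g₁ = 1 := hfree₁ _ hx₁ g₁ <| by
    simpa using shift_mul_eq_self (shift_comp_eq_self (·.1) hx) (hfix₁ _ hx₁ g₂⁻¹ g₃⁻¹)
  have hg₂ : g₂ = 1 := hfree₂ _ hx₂ g₂ <| by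
    simpa using shift_mul_eq_self (shift_comp_eq_self (·.2.1) hx) (hfix₂ _ hx₂ g₁⁻¹ g₃⁻¹)
  have hg₃ : g₃ = 1 := hfree₃ _ hx₃ g₃ <| by
    simpa using shift_mul_eq_self (shift_comp_eq_self (·.2.2) hx) (hfix₃ _ hx₃ g₁⁻¹ g₂⁻¹)
  simp [hg₁, hg₂, hg₃]

/-- The key step of Lemma 4.3: if `X₁, X₂, X₃` are `(G₁ × G₂ × G₃)`-subshifts such
that each `Xᵢ` is fixed by the shift of the other two factors and the `Gᵢ`-subaction
on `Xᵢ` is free, then the product subshift `X₁ × X₂ × X₃` is strongly aperiodic. -/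
theorem stmt16 {G₁ G₂ G₃ : Type} [Group G₁] [Group G₂] [Group G₃]
    {A₁ A₂ A₃ : Type}
    [Fintype A₁] [TopologicalSpace A₁] [DiscreteTopology A₁]
    [Fintype A₂] [TopologicalSpace A₂] [DiscreteTopology A₂]
    [Fintype A₃] [TopologicalSpace A₃] [DiscreteTopology A₃]
    (X₁ : Set ((G₁ × G₂ × G₃) → A₁)) (X₂ : Set ((G₁ × G₂ × G₃) → A₂))
    (X₃ : Set ((G₁ × G₂ × G₃) → A₃))
    (hsub₁ : IsSubshift X₁) (hsub₂ : IsSubshift X₂) (hsub₃ : IsSubshift X₃)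
    -- (a) each Xᵢ is fixed by the shift by elements of the other two factors
    (hfix₁ : ∀ x ∈ X₁, ∀ (g₂ : G₂) (g₃ : G₃), shift ((1 : G₁), g₂, g₃) x = x)
    (hfix₂ : ∀ x ∈ X₂, ∀ (g₁ : G₁) (g₃ : G₃), shift (g₁, (1 : G₂), g₃) x = x)
    (hfix₃ : ∀ x ∈ X₃, ∀ (g₁ : G₁) (g₂ : G₂), shift (g₁, g₂, (1 : G₃)) x = x)
    -- (b) the Gᵢ-subaction on Xᵢ is free
    (hfree₁ : ∀ x ∈ X₁, ∀ g₁ : G₁, shift (g₁, (1 : G₂), (1 : G₃)) x = x → g₁ = 1)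
    (hfree₂ : ∀ x ∈ X₂, ∀ g₂ : G₂, shift ((1 : G₁), g₂, (1 : G₃)) x = x → g₂ = 1)
    (hfree₃ : ∀ x ∈ X₃, ∀ g₃ : G₃, shift ((1 : G₁), (1 : G₂), g₃) x = x → g₃ = 1) :
    StronglyAperiodic {x : (G₁ × G₂ × G₃) → A₁ × A₂ × A₃ |
      (fun g => (x g).1) ∈ X₁ ∧ (fun g => (x g).2.1) ∈ X₂ ∧ (fun g => (x g).2.2) ∈ X₃} :=
  stmt16_general X₁ X₂ X₃ hfix₁ hfix₂ hfix₃ hfree₁ hfree₂ hfree₃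
end

section
/- Let G be a finitely generated group with finite symmetric generating set S containing 1_G, and let (X,T) be an effectively closed G-dynamical system with respect to S. Then the set of triples (u, v, w), where u = s₁s₂⋯s_n is a word over S and v, w ∈ {0,1}*, such that [v] ∩ T^{g(u)}([w] ∩ X) = ∅ — where g(u) = s₁s₂⋯s_n ∈ G is the group element represented by u — is recursively enumerable. -/
/-!
Write `u = a₁ ⋯ aₘ`. The set `[v] ∩ T^{g(u)}([w] ∩ X)` is nonempty exactly when some chain of
points of `X` leads from `[w]` to `[v]` through the maps `T^{aₘ}, …, T^{a₁}`. By compactness it is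
empty iff, at some resolution `N`, every sequence `v, z₁, …, zₘ₋₁, w` of words with the `zᵢ` of
length `N` has a link with `[zᵢ₋₁] ∩ T^{aᵢ}([zᵢ] ∩ X) = ∅`; the inductive step is the separation
of two disjoint closed subsets of Cantor space by the cylinders of a common length. Every link
condition is r.e. by hypothesis. Running its enumeration for `n` steps on the finitely many
links at resolution `n` gives a decidable condition, and the set in question is the set of
triples satisfying it for some `n`; closing the enumeration under extension of words is what lets
one `n` serve as both stage and resolution. The empty word is read as the generator equal to `1`.
-/

/-- The cylinder `[w]` of all one-sided binary sequences extending the word `w`. -/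
def cylinder (w : List Bool) : Set (ℕ → Bool) :=
  {x | ∀ i : Fin w.length, x i = w.get i}

/-- An action `T` of `G` on `X ⊆ {0,1}^ℕ` is effectively closed (w.r.t. the finite
generating family `s : Fin k → G`) if the set of triples `(s, v, w)` with
`[v] ∩ T^s([w] ∩ X) = ∅` is recursively enumerable. -/
def EffAction {G : Type} [Group G] {k : ℕ} (s : Fin k → G) (X : Set (ℕ → Bool))
    (T : G → (ℕ → Bool) → (ℕ → Bool)) : Prop :=
  REPred fun q : Fin k × List Bool × List Bool =>
    cylinder q.2.1 ∩ (T (s q.1) '' (cylinder q.2.2 ∩ X)) = ∅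

/-- Evaluation of a word over the generating family `s : Fin k → G`. -/
def wordEvalS {G : Type} [Group G] {k : ℕ} (s : Fin k → G) (u : List (Fin k)) : G :=
  (u.map s).prod

open Set

lemma mem_cylinder_iff {w : List Bool} {x : ℕ → Bool} :
    x ∈ cylinder w ↔ ∀ i (h : i < w.length), x i = w[i] :=
  ⟨fun hx i h => hx ⟨i, h⟩, fun hx i => hx i i.2⟩

lemma cylinder_subset_of_prefix {v w : List Bool} (h : v <+: w) : cylinder w ⊆ cylinder v := by
  intro x hx
  rw [mem_cylinder_iff] at hx ⊢
  intro i hi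
  rw [hx i (hi.trans_le h.length_le), h.getElem hi]

lemma cylinder_eq_piNat_cylinder {w : List Bool} {x : ℕ → Bool} (hx : x ∈ cylinder w) :
    cylinder w = PiNat.cylinder x w.length := by
  ext y
  rw [mem_cylinder_iff] at hx ⊢
  simp only [PiNat.mem_cylinder_iff]
  exact forall₂_congr fun i hi => by rw [hx i hi]

lemma isClosed_cylinder (w : List Bool) : IsClosed (cylinder w) := by
  have : cylinder w = ⋂ i : Fin w.length, (fun x : ℕ → Bool => x i) ⁻¹' {w.get i} := by
    ext x; simp [cylinder]
  rw [this]
  exact isClosed_iInter fun i => isClosed_singleton.preimage (continuous_apply _)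

lemma mem_cylinder_ofFn (x : ℕ → Bool) (n : ℕ) : x ∈ cylinder (List.ofFn fun i : Fin n => x i) :=
  fun _ => by simp

lemma exists_mem_cylinder (w : List Bool) : ∃ x, x ∈ cylinder w :=
  ⟨fun i => w.getD i false, mem_cylinder_iff.2 fun _ hi => List.getD_eq_getElem _ _ hi⟩

theorem disjoint_iff_exists_cylinder_length {A Y : Set (ℕ → Bool)} (hA : IsClosed A)
    (hY : IsClosed Y) :
    Disjoint A Y ↔ ∃ N, ∀ z : List Bool, z.length = N →
      Disjoint (cylinder z) A ∨ Disjoint (cylinder z) Y := by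
  constructor
  · intro hAY
    have hsep : ∀ x, ∃ n, Disjoint A (PiNat.cylinder x n) ∨ Disjoint Y (PiNat.cylinder x n) := by
      intro x
      by_cases hx : x ∈ A
      · exact (PiNat.exists_disjoint_cylinder hY (hAY.notMem_of_mem_left hx)).imp
          fun _ => Or.inr
      · exact (PiNat.exists_disjoint_cylinder hA hx).imp fun _ => Or.inl
    choose n hn using hsep
    obtain ⟨t, -, hcover⟩ := isCompact_univ.elim_nhds_subcover (fun x => PiNat.cylinder x (n x))
      fun x _ => (PiNat.isOpen_cylinder _ x (n x)).mem_nhds (PiNat.self_mem_cylinder x _)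
    refine ⟨t.sup n, fun z hz => ?_⟩
    obtain ⟨y, hy⟩ := exists_mem_cylinder z
    obtain ⟨x, hxt, hyx⟩ := mem_iUnion₂.1 (hcover (mem_univ y))
    have hsub : cylinder z ⊆ PiNat.cylinder x (n x) := by
      rw [cylinder_eq_piNat_cylinder hy, ← PiNat.mem_cylinder_iff_eq.1 hyx]
      exact PiNat.cylinder_anti y (hz ▸ Finset.le_sup hxt)
    exact (hn x).imp (fun h => (h.symm.mono_left hsub)) fun h => h.symm.mono_left hsub
  · rintro ⟨N, hN⟩
    refine disjoint_left.2 fun x hxA hxY => ?_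
    rcases hN _ (List.length_ofFn (n := N)) with h | h
    · exact h.notMem_of_mem_left (mem_cylinder_ofFn x N) hxA
    · exact h.notMem_of_mem_left (mem_cylinder_ofFn x N) hxY

def NoTransit (X : Set (ℕ → Bool)) (f : (ℕ → Bool) → ℕ → Bool) (v w : List Bool) : Prop :=
  cylinder v ∩ f '' (cylinder w ∩ X) = ∅

section NoTransit

variable {X : Set (ℕ → Bool)} {f g : (ℕ → Bool) → ℕ → Bool} {v w : List Bool}

lemma noTransit_iff_forall : NoTransit X f v w ↔ ∀ x ∈ cylinder w, x ∈ X → f x ∉ cylinder v := by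
  simp only [NoTransit, eq_empty_iff_forall_notMem, mem_inter_iff, mem_image]
  grind

lemma NoTransit.of_prefix {v' w' : List Bool} (h : NoTransit X f v w) (hv : v <+: v')
    (hw : w <+: w') : NoTransit X f v' w' := by
  rw [noTransit_iff_forall] at h ⊢
  exact fun x hx hxX hfx =>
    h x (cylinder_subset_of_prefix hw hx) hxX (cylinder_subset_of_prefix hv hfx)

lemma noTransit_congr (h : EqOn f g X) : NoTransit X f v w ↔ NoTransit X g v w := by
  simp only [noTransit_iff_forall]
  exact forall₂_congr fun x _ => forall_congr' fun hx => by rw [h hx]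

theorem noTransit_comp_iff (hX : IsClosed X) (hf : ContinuousOn f X) (hg : ContinuousOn g X)
    (hgX : MapsTo g X X) :
    NoTransit X (f ∘ g) v w ↔ ∃ N, ∀ z : List Bool, z.length = N →
      NoTransit X f v z ∨ NoTransit X g z w := by
  set A := X ∩ f ⁻¹' cylinder v
  set Y := g '' (cylinder w ∩ X)
  have hA : IsClosed A := hf.preimage_isClosed_of_isClosed hX (isClosed_cylinder v)
  have hY : IsClosed Y := (((isClosed_cylinder w).inter hX).isCompact.image_of_continuousOn
    (hg.mono inter_subset_right)).isClosed
  have hfz : ∀ z, NoTransit X f v z ↔ Disjoint (cylinder z) A := fun z => by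
    simp only [noTransit_iff_forall, disjoint_left, A, mem_inter_iff, mem_preimage]
    tauto
  have hgz : ∀ z, NoTransit X g z w ↔ Disjoint (cylinder z) Y := fun z =>
    disjoint_iff_inter_eq_empty.symm
  have hfg : NoTransit X (f ∘ g) v w ↔ Disjoint A Y := by
    simp only [noTransit_iff_forall, disjoint_right, A, Y, mem_image, mem_inter_iff, mem_preimage,
      Function.comp_apply]
    grind [MapsTo]
  simp only [hfg, disjoint_iff_exists_cylinder_length hA hY, hfz, hgz]

end NoTransit

section Blocked

variable {α : Type*}

def ExtensionClosed (R : α × List Bool × List Bool → Prop) : Prop :=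
  ∀ ⦃a v v' w w'⦄, v <+: v' → w <+: w' → R (a, v, w) → R (a, v', w')

def words : ℕ → List (List Bool)
  | 0 => [[]]
  | n + 1 => (words n).flatMap fun z => [false :: z, true :: z]

lemma mem_words {n : ℕ} {z : List Bool} : z ∈ words n ↔ z.length = n := by
  induction n generalizing z with
  | zero => simp [words]
  | succ n ih =>
    cases z with
    | nil => simp [words]
    | cons b z => cases b <;> simp [words, ih]

/-- The words of length `N` (just `w` when `u = []`) from which some path through the letters `u`
reaches `w` without crossing an `R`-link. -/
noncomputable def escapingWords (R : α × List Bool × List Bool → Prop) (N : ℕ) (w : List Bool) :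
    List α → List (List Bool)
  | [] => [w]
  | a :: u => open Classical in (words N).filter fun z => ∃ y ∈ escapingWords R N w u, ¬R (a, z, y)

/-- Every path `v = z₀, z₁, …, zₘ = w` whose inner words have length `N`, read along the letters
`a :: u`, contains an `R`-link `(aᵢ, zᵢ, zᵢ₊₁)`. -/
def Blocked (R : α × List Bool × List Bool → Prop) (N : ℕ) (a : α) (u : List α)
    (v w : List Bool) : Prop :=
  ∀ y ∈ escapingWords R N w u, R (a, v, y)

variable {R R' : α × List Bool × List Bool → Prop} {N : ℕ} {a b : α} {u : List α}
  {v w : List Bool}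

lemma blocked_nil : Blocked R N a [] v w ↔ R (a, v, w) := by
  simp [Blocked, escapingWords]

lemma blocked_cons :
    Blocked R N a (b :: u) v w ↔
      ∀ z : List Bool, z.length = N → R (a, v, z) ∨ Blocked R N b u z w := by
  simp only [Blocked, escapingWords, List.mem_filter, mem_words, decide_eq_true_eq]
  grind

lemma Blocked.of_prefix (hR : ExtensionClosed R) (h : Blocked R N a u v w) {v' : List Bool}
    (hv : v <+: v') : Blocked R N a u v' w :=
  fun y hy => hR hv List.prefix_rfl (h y hy)

lemma Blocked.mono (hRR' : ∀ q, R q → R' q) (hR' : ExtensionClosed R') {N' : ℕ} (hN : N ≤ N')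
    (h : Blocked R N a u v w) : Blocked R' N' a u v w := by
  induction u generalizing a v with
  | nil => exact blocked_nil.2 (hRR' _ (blocked_nil.1 h))
  | cons b u ih =>
    refine blocked_cons.2 fun z' hz' => ?_
    have hpre : z'.take N <+: z' := List.take_prefix _ _
    rcases blocked_cons.1 h (z'.take N) (by simp [hz', hN]) with h | h
    · exact Or.inl (hR' List.prefix_rfl hpre (hRR' _ h))
    · exact Or.inr ((ih h).of_prefix hR' hpre)

end Blocked

section StageApprox

structure IsStageApprox {β : Type*} (p : β → Prop) (S : β → ℕ → Prop) : Prop where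
  mono : ∀ b, Monotone (S b)
  iff_exists : ∀ b, p b ↔ ∃ n, S b n

variable {α : Type*} {S : α × List Bool × List Bool → ℕ → Prop}

def prefixClosure (S : α × List Bool × List Bool → ℕ → Prop) (q : α × List Bool × List Bool)
    (n : ℕ) : Prop :=
  ∃ v ∈ q.2.1.inits, ∃ w ∈ q.2.2.inits, S (q.1, v, w) n

lemma extensionClosed_prefixClosure (n : ℕ) : ExtensionClosed fun q => prefixClosure S q n := by
  rintro a v v' w w' hv hw ⟨v₀, hv₀, w₀, hw₀, h⟩
  rw [List.mem_inits] at hv₀ hw₀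
  exact ⟨v₀, (List.mem_inits _ _).2 (hv₀.trans hv), w₀, (List.mem_inits _ _).2 (hw₀.trans hw), h⟩

lemma IsStageApprox.prefixClosure {p : α × List Bool × List Bool → Prop}
    (hS : IsStageApprox p S) (hp : ExtensionClosed p) : IsStageApprox p (prefixClosure S) where
  mono q _ _ hn := fun ⟨v, hv, w, hw, h⟩ => ⟨v, hv, w, hw, hS.mono _ hn h⟩
  iff_exists q := by
    refine ⟨fun h => ?_, fun ⟨n, v, hv, w, hw, h⟩ => ?_⟩
    · obtain ⟨n, h⟩ := (hS.iff_exists q).1 h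
      exact ⟨n, q.2.1, (List.mem_inits _ _).2 List.prefix_rfl, q.2.2,
        (List.mem_inits _ _).2 List.prefix_rfl, h⟩
    · rw [List.mem_inits] at hv hw
      exact hp hv hw ((hS.iff_exists _).2 ⟨n, h⟩)

end StageApprox

theorem noTransit_prod_iff_exists_blocked {α G : Type*} [Monoid G] {X : Set (ℕ → Bool)}
    {T : G → (ℕ → Bool) → ℕ → Bool} (hX : IsClosed X) (hTcont : ∀ g, ContinuousOn (T g) X)
    (hTX : ∀ g, MapsTo (T g) X X) (hTmul : ∀ g h : G, ∀ x ∈ X, T (g * h) x = T g (T h x))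
    {s : α → G} {S : α × List Bool × List Bool → ℕ → Prop}
    (hS : IsStageApprox (fun q => NoTransit X (T (s q.1)) q.2.1 q.2.2) S)
    (hSext : ∀ n, ExtensionClosed fun q => S q n) (a : α) (u : List α) (v w : List Bool) :
    NoTransit X (T (s a * (u.map s).prod)) v w ↔ ∃ n, Blocked (fun q => S q n) n a u v w := by
  induction u generalizing a v w with
  | nil => simpa [blocked_nil] using hS.iff_exists (a, v, w)
  | cons b u ih =>
    have hmono {n n'} (hn : n ≤ n') {z : List Bool} :
        Blocked (fun q => S q n) n b u z w → Blocked (fun q => S q n') n' b u z w :=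
      Blocked.mono (fun q => hS.mono q hn) (hSext n') hn
    rw [List.map_cons, List.prod_cons,
      noTransit_congr (g := T (s a) ∘ T (s b * (u.map s).prod)) fun x hx => hTmul _ _ x hx,
      noTransit_comp_iff hX (hTcont _) (hTcont _) (hTX _)]
    have hS' : ∀ v z, NoTransit X (T (s a)) v z ↔ ∃ n, S (a, v, z) n :=
      fun v z => hS.iff_exists (a, v, z)
    simp only [ih, hS']
    constructor
    · rintro ⟨N, hN⟩
      have hN' : ∀ z ∈ words N, ∃ n, S (a, v, z) n ∨ Blocked (fun q => S q n) n b u z w :=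
        fun z hz => by
          rcases hN z (mem_words.1 hz) with ⟨n, h⟩ | ⟨n, h⟩
          exacts [⟨n, .inl h⟩, ⟨n, .inr h⟩]
      choose! n hn using hN'
      -- a single stage and resolution serve all the finitely many words of length `N`
      refine ⟨max N ((words N).toFinset.sup n), blocked_cons.2 fun z' hz' => ?_⟩
      have hz : z'.take N ∈ words N := mem_words.2 (by simp [hz'])
      have hpre : z'.take N <+: z' := List.take_prefix _ _
      have hle : n (z'.take N) ≤ max N ((words N).toFinset.sup n) :=
        (Finset.le_sup (List.mem_toFinset.2 hz)).trans (le_max_right _ _)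
      rcases hn _ hz with h | h
      · exact .inl (hSext _ List.prefix_rfl hpre (hS.mono _ hle h))
      · exact .inr ((hmono hle h).of_prefix (hSext _) hpre)
    · rintro ⟨n, hn⟩
      exact ⟨n, fun z hz => (blocked_cons.1 hn z hz).imp (fun h => ⟨n, h⟩) fun h => ⟨n, h⟩⟩

lemma List.inits_eq_map_take {β : Type*} (l : List β) :
    l.inits = (List.range (l.length + 1)).map l.take :=
  List.ext_getElem (by simp) fun n _ _ => by simp [List.getElem_inits]

section Computability

open Primrec

variable {α β : Type*} [Primcodable α] [Primcodable β]

open Nat.Partrec Code in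
theorem REPred.exists_isStageApprox {p : β → Prop} (hp : REPred p) :
    ∃ S : β → ℕ → Prop, PrimrecRel S ∧ IsStageApprox p S := by
  obtain ⟨c, hc⟩ := Code.exists_code.1 hp
  refine ⟨fun b n => (evaln n c (Encodable.encode b)).isSome, ?_, fun b n n' hn h => ?_,
    fun b => ?_⟩
  · exact Primrec.primrecPred ((option_isSome.comp (primrec_evaln.comp
      ((snd.pair (const c)).pair (Primrec.encode.comp fst)))).of_eq
        fun _ => Bool.decide_eq_true.symm)
  · obtain ⟨x, hx⟩ := Option.isSome_iff_exists.1 h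
    exact Option.isSome_iff_exists.2 ⟨x, evaln_mono hn hx⟩
  · have hdom : p b ↔ (eval c (Encodable.encode b)).Dom := by
      simp [hc, Encodable.encodek, Part.assert]
    simp only [hdom, Part.dom_iff_mem, evaln_complete, Option.isSome_iff_exists, Option.mem_def]
    exact ⟨fun ⟨x, n, h⟩ => ⟨n, x, h⟩, fun ⟨n, x, h⟩ => ⟨x, n, h⟩⟩

theorem PrimrecRel.rePred_exists {R : β → ℕ → Prop} (hR : PrimrecRel R) :
    REPred fun b => ∃ n, R b n := by
  classical
  refine (Partrec.rfind hR.decide.to_comp.partrec₂).dom_re.of_eq fun b => ?_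
  simp [Nat.rfind_dom]

theorem Primrec.list_inits : Primrec (@List.inits β) :=
  (list_map (list_range.comp (succ.comp list_length)) (list_take.comp snd fst).to₂).of_eq
    fun l => l.inits_eq_map_take.symm

theorem primrec_words : Primrec words := by
  have hcons : Primrec₂ fun (_ : ℕ × List (List Bool)) (z : List Bool) => [false :: z, true :: z] :=
    (list_cons.comp (list_cons.comp (const false) snd)
      (list_cons.comp (list_cons.comp (const true) snd) (const []))).to₂
  refine (nat_rec₁ [[]] (list_flatMap snd hcons).to₂).of_eq fun n => ?_
  induction n with
  | zero => rfl
  | succ n ih => exact congrArg (List.flatMap _) ih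

variable {S : α × List Bool × List Bool → ℕ → Prop}

theorem primrec_escapingWords (hS : PrimrecRel S) :
    Primrec fun p : (ℕ × List Bool) × List α =>
      escapingWords (fun q => S q p.1.1) p.1.1 p.1.2 p.2 := by
  classical
  have hlink : PrimrecRel fun (y : List Bool) (d : List Bool × List (List Bool) × α × ℕ) =>
      ¬S (d.2.2.1, d.1, y) d.2.2.2 :=
    (hS.comp ((fst.comp (snd.comp (snd.comp snd))).pair ((fst.comp snd).pair fst))
      (snd.comp (snd.comp (snd.comp snd)))).not
  have hescape : PrimrecRel fun (z : List Bool) (c : List (List Bool) × α × ℕ) =>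
      ∃ y ∈ c.1, ¬S (c.2.1, z, y) c.2.2 :=
    hlink.exists_mem_list.comp (fst.comp snd) (fst.pair snd)
  have hstep : Primrec₂ fun (p : (ℕ × List Bool) × List α) (t : α × List α × List (List Bool)) =>
      (words p.1.1).filter fun z => ∃ y ∈ t.2.2, ¬S (t.1, z, y) p.1.1 :=
    hescape.listFilter.comp
      (primrec_words.comp (fst.comp (fst.comp fst)))
      ((snd.comp (snd.comp snd)).pair ((fst.comp snd).pair (fst.comp (fst.comp fst))))
  refine (list_rec snd (list_cons.comp (snd.comp fst) (const [])) hstep).of_eq fun p => ?_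
  obtain ⟨⟨n, w⟩, u⟩ := p
  induction u with
  | nil => rfl
  | cons a u ih => simp only [escapingWords, ← ih]

theorem primrecRel_blocked (hS : PrimrecRel S) (a : α) :
    PrimrecRel fun (q : List α × List Bool × List Bool) (n : ℕ) =>
      Blocked (fun q => S q n) n a q.1 q.2.1 q.2.2 := by
  have hlink : PrimrecRel fun (y : List Bool) (d : List Bool × ℕ) => S (a, d.1, y) d.2 :=
    hS.comp ((const a).pair ((fst.comp snd).pair fst)) (snd.comp snd)
  exact hlink.forall_mem_list.comp
    ((primrec_escapingWords hS).comp ((snd.pair (snd.comp (snd.comp fst))).pair (fst.comp fst)))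
    ((fst.comp (snd.comp fst)).pair snd)

theorem PrimrecRel.prefixClosure (hS : PrimrecRel S) :
    PrimrecRel (prefixClosure S) := by
  have hw : PrimrecRel fun (w : List Bool) (c : List Bool × (α × List Bool × List Bool) × ℕ) =>
      S (c.2.1.1, c.1, w) c.2.2 :=
    hS.comp ((fst.comp (fst.comp (snd.comp snd))).pair ((fst.comp snd).pair fst))
      (snd.comp (snd.comp snd))
  have hv : PrimrecRel fun (v : List Bool) (d : (α × List Bool × List Bool) × ℕ) =>
      ∃ w ∈ d.1.2.2.inits, S (d.1.1, v, w) d.2 :=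
    hw.exists_mem_list.comp (Primrec.list_inits.comp (snd.comp (snd.comp (fst.comp snd))))
      (fst.pair snd)
  exact hv.exists_mem_list.comp (Primrec.list_inits.comp (fst.comp (snd.comp fst))) Primrec.id

end Computability


theorem stmt17_general {G : Type} [Group G]
    {k : ℕ} (s : Fin k → G)
    (hone : ∃ i : Fin k, s i = 1)
    (X : Set (ℕ → Bool)) (hX : IsClosed X)
    (T : G → (ℕ → Bool) → (ℕ → Bool))
    (hTcont : ∀ g : G, ContinuousOn (T g) X)
    (hTX : ∀ g : G, T g '' X = X)
    (hTmul : ∀ g h : G, ∀ x ∈ X, T (g * h) x = T g (T h x))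
    (hEff : EffAction s X T) :
    REPred fun q : List (Fin k) × List Bool × List Bool =>
      cylinder q.2.1 ∩ (T (wordEvalS s q.1) '' (cylinder q.2.2 ∩ X)) = ∅ := by
  obtain ⟨i₀, hi₀⟩ := hone
  obtain ⟨S, hSprim, hS⟩ := REPred.exists_isStageApprox hEff
  have hext : ExtensionClosed fun q : Fin k × List Bool × List Bool =>
      NoTransit X (T (s q.1)) q.2.1 q.2.2 :=
    fun _ _ _ _ _ hv hw h => h.of_prefix hv hw
  refine (PrimrecRel.rePred_exists (primrecRel_blocked hSprim.prefixClosure i₀)).of_eq fun q => ?_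
  rw [← noTransit_prod_iff_exists_blocked hX hTcont
    (fun g => mapsTo_iff_image_subset.2 (hTX g).subset) hTmul (hS.prefixClosure hext)
    extensionClosed_prefixClosure, hi₀, one_mul]
  rfl

/-- If `(X, T)` is an effectively closed `G`-dynamical system w.r.t. a finite symmetric
generating family `s` containing `1`, then the set of triples `(u, v, w)`, with `u` a
word over `S` and `v, w` binary words, such that `[v] ∩ T^{g(u)}([w] ∩ X) = ∅`, is
recursively enumerable. -/
theorem stmt17 {G : Type} [Group G]
    {k : ℕ} (s : Fin k → G)
    (hgen : Subgroup.closure (Set.range s) = ⊤)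
    (hsym : ∀ i : Fin k, ∃ j : Fin k, s j = (s i)⁻¹)
    (hone : ∃ i : Fin k, s i = 1)
    (X : Set (ℕ → Bool)) (hX : IsClosed X)
    (T : G → (ℕ → Bool) → (ℕ → Bool))
    (hTcont : ∀ g : G, ContinuousOn (T g) X)
    (hTX : ∀ g : G, T g '' X = X)
    (hT1 : ∀ x ∈ X, T 1 x = x)
    (hTmul : ∀ g h : G, ∀ x ∈ X, T (g * h) x = T g (T h x))
    (hEff : EffAction s X T) :
    REPred fun q : List (Fin k) × List Bool × List Bool =>
      cylinder q.2.1 ∩ (T (wordEvalS s q.1) '' (cylinder q.2.2 ∩ X)) = ∅ :=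
  stmt17_general s hone X hX T hTcont hTX hTmul hEff
end
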